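/- arXiv:1809.08130 — 3 statements merged into one kernel-verified Lean document; each statement's English description precedes it below -/
import Mathlib

section
/- Let p > 2, let Ω ⊂ ℝ² be open, and let u : Ω → ℝ be twice continuously differentiable with ∇u(x) ≠ 0 for all x ∈ Ω, with |∇u|^{p−2}·Δu + (p−2)·|∇u|^{p−4}·Δ∞u = 0 at every point of Ω (u is p-harmonic), and with Δu ≤ 0 at every point of Ω (u is superharmonic). If γ : [a,b] → Ω is differentiable with γ'(t) = ∇u(γ(t)) for all t, then the function t ↦ u(γ(t)) is convex on [a,b]. -/
open Set

noncomputable section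

/-- Second partial derivative ∂²u/∂xᵢ∂xⱼ of `u : ℝ² → ℝ`. -/
def secondPartial (u : EuclideanSpace ℝ (Fin 2) → ℝ) (x : EuclideanSpace ℝ (Fin 2))
    (i j : Fin 2) : ℝ :=
  fderiv ℝ (fderiv ℝ u) x (EuclideanSpace.single i 1) (EuclideanSpace.single j 1)

/-- The infinity-Laplacian Δ∞u = Σᵢⱼ (∂u/∂xᵢ)(∂u/∂xⱼ)(∂²u/∂xᵢ∂xⱼ). -/
def inftyLaplacian (u : EuclideanSpace ℝ (Fin 2) → ℝ) (x : EuclideanSpace ℝ (Fin 2)) : ℝ :=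
  ∑ i : Fin 2, ∑ j : Fin 2,
    fderiv ℝ u x (EuclideanSpace.single i 1) * fderiv ℝ u x (EuclideanSpace.single j 1) *
      secondPartial u x i j

/-- The ordinary Laplacian Δu = Σᵢ ∂²u/∂xᵢ². -/
def ordLaplacian (u : EuclideanSpace ℝ (Fin 2) → ℝ) (x : EuclideanSpace ℝ (Fin 2)) : ℝ :=
  ∑ i : Fin 2, secondPartial u x i i

/-!
Along a streamline `γ' = ∇u(γ)` one has `(u ∘ γ)' = ‖∇u(γ)‖²` and, differentiating once more,
`(u ∘ γ)'' = 2 D²u(γ)(∇u, ∇u) = 2 Δ∞u(γ)`. Dividing the expanded `p`-Laplace equation by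
`|∇u|^(p-4)` gives `(p - 2) Δ∞u = -|∇u|² Δu`, which is nonnegative when `u` is superharmonic.
-/

open InnerProductSpace
open scoped Gradient

section Streamline

variable {F : Type*} [NormedAddCommGroup F] [InnerProductSpace ℝ F] [CompleteSpace F]
  {u : F → ℝ} {γ : ℝ → F} {t : ℝ}

theorem HasDerivAt.gradient_comp {v : F} (hu : DifferentiableAt ℝ (fderiv ℝ u) (γ t))
    (hγ : HasDerivAt γ v t) :
    HasDerivAt (fun s => ∇ u (γ s)) ((toDual ℝ F).symm (fderiv ℝ (fderiv ℝ u) (γ t) v)) t :=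
  ((toDual ℝ F).symm.hasFDerivAt.comp (γ t) hu.hasFDerivAt).comp_hasDerivAt t hγ

theorem HasDerivAt.norm_sq_gradient_comp {v : F} (hu : DifferentiableAt ℝ (fderiv ℝ u) (γ t))
    (hγ : HasDerivAt γ v t) :
    HasDerivAt (fun s => ‖∇ u (γ s)‖ ^ 2)
      (2 * fderiv ℝ (fderiv ℝ u) (γ t) v (∇ u (γ t))) t := by
  convert (hγ.gradient_comp hu).norm_sq using 2
  rw [real_inner_comm, toDual_symm_apply]

theorem hasDerivAt_comp_of_hasDerivAt_gradient (hu : DifferentiableAt ℝ u (γ t))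
    (hγ : HasDerivAt γ (∇ u (γ t)) t) :
    HasDerivAt (fun s => u (γ s)) (‖∇ u (γ t)‖ ^ 2) t := by
  have h := hu.hasFDerivAt.comp_hasDerivAt t hγ
  rwa [← inner_gradient_left, real_inner_self_eq_norm_sq] at h

end Streamline

theorem inftyLaplacian_eq_fderiv_fderiv_gradient (u : EuclideanSpace ℝ (Fin 2) → ℝ)
    (x : EuclideanSpace ℝ (Fin 2)) :
    inftyLaplacian u x = fderiv ℝ (fderiv ℝ u) x (∇ u x) (∇ u x) := by
  have hsingle : ∀ i, fderiv ℝ u x (EuclideanSpace.single i 1) = ∇ u x i := fun i => by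
    rw [← inner_gradient_left, EuclideanSpace.inner_single_right, one_mul, RCLike.conj_to_real]
  have hdecomp : ∇ u x = ∑ i : Fin 2, ∇ u x i • EuclideanSpace.single i 1 := by
    ext j
    fin_cases j <;> simp
  conv_rhs => rw [hdecomp]
  simp only [inftyLaplacian, secondPartial, hsingle, Fin.sum_univ_two, map_add, map_smul,
    add_apply, smul_apply, smul_eq_mul]
  ring

theorem inftyLaplacian_nonneg_of_superharmonic {p : ℝ} (hp : 2 < p)
    {u : EuclideanSpace ℝ (Fin 2) → ℝ} {x : EuclideanSpace ℝ (Fin 2)} (hgrad : ∇ u x ≠ 0)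
    (hpharm : ‖∇ u x‖ ^ (p - 2) * ordLaplacian u x
        + (p - 2) * ‖∇ u x‖ ^ (p - 4) * inftyLaplacian u x = 0)
    (hsuper : ordLaplacian u x ≤ 0) :
    0 ≤ inftyLaplacian u x := by
  have hpos : 0 < ‖∇ u x‖ := norm_pos_iff.2 hgrad
  have hsplit : ‖∇ u x‖ ^ (p - 2) = ‖∇ u x‖ ^ (2 : ℝ) * ‖∇ u x‖ ^ (p - 4) := by
    rw [← Real.rpow_add hpos]; ring_nf
  have hrpow : 0 < ‖∇ u x‖ ^ (p - 4) := Real.rpow_pos_of_pos hpos _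
  have hsq : 0 < ‖∇ u x‖ ^ (2 : ℝ) := Real.rpow_pos_of_pos hpos _
  rw [hsplit] at hpharm
  nlinarith [mul_nonpos_of_nonneg_of_nonpos (mul_pos hsq hrpow).le hsuper,
    mul_pos (sub_pos.2 hp) hrpow]

/-- Along a streamline of a C² `p`-harmonic (and superharmonic) function with
nonvanishing gradient, `t ↦ u(γ(t))` is convex. -/
theorem statement2 (p : ℝ) (hp : 2 < p)
    (Ω : Set (EuclideanSpace ℝ (Fin 2))) (hΩ : IsOpen Ω)
    (u : EuclideanSpace ℝ (Fin 2) → ℝ) (hu : ContDiffOn ℝ 2 u Ω)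
    (hgrad : ∀ x ∈ Ω, gradient u x ≠ 0)
    (hpharm : ∀ x ∈ Ω,
      ‖gradient u x‖ ^ (p - 2) * ordLaplacian u x
        + (p - 2) * ‖gradient u x‖ ^ (p - 4) * inftyLaplacian u x = 0)
    (hsuper : ∀ x ∈ Ω, ordLaplacian u x ≤ 0)
    (a b : ℝ) (γ : ℝ → EuclideanSpace ℝ (Fin 2))
    (hγΩ : ∀ t ∈ Icc a b, γ t ∈ Ω)
    (hγ' : ∀ t ∈ Icc a b, HasDerivAt γ (gradient u (γ t)) t) :
    ConvexOn ℝ (Icc a b) (fun t => u (γ t)) := by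
  have hfderiv : ContDiffOn ℝ 1 (fderiv ℝ u) Ω := hu.fderiv_of_isOpen hΩ (by norm_num)
  refine convexOn_of_hasDerivWithinAt2_nonneg (convex_Icc a b) (f' := fun t => ‖∇ u (γ t)‖ ^ 2)
    (f'' := fun t => 2 * inftyLaplacian u (γ t))
    (hu.continuousOn.comp (fun t ht => (hγ' t ht).continuousAt.continuousWithinAt) hγΩ)
    (fun t ht => ?_) (fun t ht => ?_) (fun t ht => ?_) <;>
  obtain ⟨ht, hx⟩ : t ∈ Icc a b ∧ γ t ∈ Ω := ⟨interior_subset ht, hγΩ t (interior_subset ht)⟩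
  · have hudiff := (hu.contDiffAt (hΩ.mem_nhds hx)).differentiableAt (by norm_num)
    exact (hasDerivAt_comp_of_hasDerivAt_gradient hudiff (hγ' t ht)).hasDerivWithinAt
  · have hfderivDiff := (hfderiv.contDiffAt (hΩ.mem_nhds hx)).differentiableAt one_ne_zero
    rw [inftyLaplacian_eq_fderiv_fderiv_gradient]
    exact ((hγ' t ht).norm_sq_gradient_comp hfderivDiff).hasDerivWithinAt
  · exact mul_nonneg zero_le_two
      (inftyLaplacian_nonneg_of_superharmonic hp (hgrad _ hx) (hpharm _ hx) (hsuper _ hx))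
end
end

section
/- Let u : ℝⁿ → ℝ be continuous and bounded below, let ε > 0, and let x ∈ ℝⁿ be a point at which u_ε is differentiable. If y ∈ ℝⁿ attains the infimum defining u_ε(x), i.e. u_ε(x) = u(y) + |x−y|²/(2ε), then ∇u_ε(x) = (x − y)/ε. In particular, the point attaining the infimum is unique: y = x − ε∇u_ε(x). -/
/-! The infimal convolution `u_ε` lies below every paraboloid `z ↦ u y + ‖z - y‖² / (2ε)`,
and touches the one with vertex at a minimiser `y` for `x` at the point `x`. Two differentiable
functions touching in this way have the same gradient, and the paraboloid's gradient at `x`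
is `(x - y) / ε`. -/

open Set

noncomputable section

/-- The infimal convolution `u_ε(x) = inf_y ( u(y) + |x−y|²/(2ε) )`. -/
def infConv {n : ℕ} (u : EuclideanSpace ℝ (Fin n) → ℝ) (ε : ℝ)
    (x : EuclideanSpace ℝ (Fin n)) : ℝ :=
  ⨅ y : EuclideanSpace ℝ (Fin n), (u y + ‖x - y‖ ^ 2 / (2 * ε))

open Filter Topology InnerProductSpace

theorem HasFDerivAt.eq_of_eventuallyLE_of_eq {E : Type*} [NormedAddCommGroup E]
    [NormedSpace ℝ E] {f g : E → ℝ} {f' g' : E →L[ℝ] ℝ} {a : E}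
    (hf : HasFDerivAt f f' a) (hg : HasFDerivAt g g' a) (hle : f ≤ᶠ[𝓝 a] g)
    (heq : f a = g a) : f' = g' := by
  have hmin : IsLocalMin (fun z => g z - f z) a := by
    filter_upwards [hle] with z hz
    simp only [heq, sub_self, sub_nonneg, hz]
  exact (sub_eq_zero.mp (hmin.hasFDerivAt_eq_zero (hg.sub hf))).symm

theorem HasGradientAt.eq_of_eventuallyLE_of_eq {F : Type*} [NormedAddCommGroup F]
    [InnerProductSpace ℝ F] [CompleteSpace F] {f g : F → ℝ} {f' g' a : F}
    (hf : HasGradientAt f f' a) (hg : HasGradientAt g g' a) (hle : f ≤ᶠ[𝓝 a] g)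
    (heq : f a = g a) : f' = g' :=
  (toDual ℝ F).injective <|
    hf.hasFDerivAt.eq_of_eventuallyLE_of_eq hg.hasFDerivAt hle heq

theorem hasGradientAt_const_add_norm_sub_sq_div {F : Type*} [NormedAddCommGroup F]
    [InnerProductSpace ℝ F] [CompleteSpace F] (c ε : ℝ) (x y : F) :
    HasGradientAt (fun z => c + ‖z - y‖ ^ 2 / (2 * ε)) (ε⁻¹ • (x - y)) x := by
  rw [hasGradientAt_iff_hasFDerivAt]
  have h := (((hasFDerivAt_id x).sub_const y).norm_sq.mul_const (2 * ε)⁻¹).const_add c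
  simp only [id, ← div_eq_mul_inv] at h
  refine h.congr_fderiv ?_
  ext v
  simp only [toDual_apply_apply, smul_apply, ContinuousLinearMap.comp_id,
    innerSL_apply_apply, real_inner_smul_left, smul_eq_mul, nsmul_eq_mul, Nat.cast_ofNat]
  field_simp

theorem infConv_le {n : ℕ} {u : EuclideanSpace ℝ (Fin n) → ℝ} (hbdd : BddBelow (range u))
    {ε : ℝ} (hε : 0 ≤ ε) (x y : EuclideanSpace ℝ (Fin n)) :
    infConv u ε x ≤ u y + ‖x - y‖ ^ 2 / (2 * ε) := by
  obtain ⟨c, hc⟩ := hbdd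
  refine ciInf_le ⟨c, ?_⟩ y
  rintro _ ⟨y', rfl⟩
  have hu : c ≤ u y' := hc ⟨y', rfl⟩
  have hsq : 0 ≤ ‖x - y'‖ ^ 2 / (2 * ε) := by positivity
  linarith

theorem statement7_general {n : ℕ} (u : EuclideanSpace ℝ (Fin n) → ℝ)
    (hbdd : BddBelow (Set.range u))
    (ε : ℝ) (hε : 0 < ε) (x : EuclideanSpace ℝ (Fin n))
    (hdiff : DifferentiableAt ℝ (infConv u ε) x)
    (y : EuclideanSpace ℝ (Fin n))
    (hy : infConv u ε x = u y + ‖x - y‖ ^ 2 / (2 * ε)) :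
    gradient (infConv u ε) x = ε⁻¹ • (x - y) ∧ y = x - ε • gradient (infConv u ε) x := by
  have hgrad : gradient (infConv u ε) x = ε⁻¹ • (x - y) :=
    hdiff.hasGradientAt.eq_of_eventuallyLE_of_eq
      (hasGradientAt_const_add_norm_sub_sq_div (u y) ε x y)
      (Eventually.of_forall fun z => infConv_le hbdd hε.le z y) hy
  refine ⟨hgrad, ?_⟩
  rw [hgrad, smul_inv_smul₀ hε.ne', sub_sub_cancel]

/-- If `u_ε` is differentiable at `x` and the infimum defining `u_ε(x)` is attained
at `y`, then `∇u_ε(x) = (x − y)/ε`; in particular `y = x − ε∇u_ε(x)` is unique. -/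
theorem statement7 {n : ℕ} (u : EuclideanSpace ℝ (Fin n) → ℝ)
    (hcont : Continuous u) (hbdd : BddBelow (Set.range u))
    (ε : ℝ) (hε : 0 < ε) (x : EuclideanSpace ℝ (Fin n))
    (hdiff : DifferentiableAt ℝ (infConv u ε) x)
    (y : EuclideanSpace ℝ (Fin n))
    (hy : infConv u ε x = u y + ‖x - y‖ ^ 2 / (2 * ε)) :
    gradient (infConv u ε) x = ε⁻¹ • (x - y) ∧ y = x - ε • gradient (infConv u ε) x :=
  statement7_general u hbdd ε hε x hdiff y hy
end
end

section
/- Let u : ℝⁿ → ℝ be differentiable with ∇u continuous, and semiconvex, i.e. there is a constant C > 0 such that x ↦ u(x) + C|x|² is convex. If γ₁, γ₂ : [0,T] → ℝⁿ are differentiable curves satisfying the descending gradient flow equation γᵢ'(t) = −∇u(γᵢ(t)) for all t ∈ [0,T] (i = 1,2) and γ₁(0) = γ₂(0), then γ₁(t) = γ₂(t) for all t ∈ [0,T]. -/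
/-!
Along two gradient-flow lines `γ₁, γ₂` of `u`, the derivative of `‖γ₁ - γ₂‖²` is
`-2⟪∇u γ₁ - ∇u γ₂, γ₁ - γ₂⟫`. Convexity of `u + C‖·‖²` makes `∇u + 2C • id` monotone,
so this derivative is at most `4C‖γ₁ - γ₂‖²`, and Grönwall's inequality forces
`‖γ₁ - γ₂‖² = 0` once it vanishes at the initial time.
-/

open Set
open scoped RealInnerProductSpace

theorem nonpos_of_deriv_right_le_mul_self {f f' : ℝ → ℝ} {K a b : ℝ}
    (hf : ContinuousOn f (Icc a b))
    (hf' : ∀ x ∈ Ico a b, HasDerivWithinAt f (f' x) (Ici x) x)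
    (ha : f a ≤ 0) (bound : ∀ x ∈ Ico a b, f' x ≤ K * f x) :
    ∀ x ∈ Icc a b, f x ≤ 0 := by
  intro x hx
  calc f x
    _ ≤ gronwallBound 0 K 0 (x - a) :=
      le_gronwallBound_of_liminf_deriv_right_le hf
        (fun x hx _ hr => (hf' x hx).liminf_right_slope_le hr) ha (by simpa using bound) x hx
    _ = 0 := gronwallBound_ε0_δ0 K (x - a)

theorem ConvexOn.le_apply_sub_of_hasFDerivAt {E : Type*} [NormedAddCommGroup E] [NormedSpace ℝ E]
    {f : E → ℝ} {f' : E → E →L[ℝ] ℝ} (hf : ConvexOn ℝ univ f)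
    (hf' : ∀ x, HasFDerivAt f (f' x) x) (x y : E) :
    f' x (y - x) ≤ f' y (y - x) := by
  have hφ : ConvexOn ℝ univ (f ∘ AffineMap.lineMap x y) := hf.comp_affineMap _
  have hφ' : ∀ t : ℝ,
      HasDerivAt (f ∘ AffineMap.lineMap x y) (f' (AffineMap.lineMap x y t) (y - x)) t :=
    fun t => (hf' _).comp_hasDerivAt t AffineMap.hasDerivAt_lineMap
  have := (hφ.le_slope_of_hasDerivAt (mem_univ 0) (mem_univ 1) one_pos (hφ' 0)).trans
    (hφ.slope_le_of_hasDerivAt (mem_univ 0) (mem_univ 1) one_pos (hφ' 1))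
  simpa only [AffineMap.lineMap_apply_zero, AffineMap.lineMap_apply_one] using this

def SemiconvexWith {E : Type*} [NormedAddCommGroup E] [NormedSpace ℝ E] (C : ℝ) (u : E → ℝ) :
    Prop :=
  ConvexOn ℝ univ fun x => u x + C * ‖x‖ ^ 2

section Semiconvex

variable {F : Type*} [NormedAddCommGroup F] [InnerProductSpace ℝ F] [CompleteSpace F]

theorem SemiconvexWith.inner_gradient_sub_ge {C : ℝ} {u : F → ℝ} (hu : SemiconvexWith C u)
    (hdiff : Differentiable ℝ u) (x y : F) :
    -(2 * C) * ‖y - x‖ ^ 2 ≤ ⟪gradient u y - gradient u x, y - x⟫ := by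
  have hderiv : ∀ z, HasFDerivAt (fun x => u x + C * ‖x‖ ^ 2)
      (fderiv ℝ u z + C • (2 • innerSL ℝ z)) z :=
    fun z => (hdiff z).hasFDerivAt.add ((hasStrictFDerivAt_norm_sq z).hasFDerivAt.const_smul C)
  have := hu.le_apply_sub_of_hasFDerivAt hderiv x y
  simp only [add_apply, smul_apply, innerSL_apply_apply,
    ← inner_gradient_left, smul_eq_mul, nsmul_eq_mul] at this
  have hnorm : ‖y - x‖ ^ 2 = ⟪y, y - x⟫ - ⟪x, y - x⟫ := by
    rw [← inner_sub_left, real_inner_self_eq_norm_sq]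
  rw [inner_sub_left, hnorm]
  push_cast at this
  linarith

theorem SemiconvexWith.eqOn_of_hasDerivAt_neg_gradient {C a b : ℝ} {u : F → ℝ}
    (hu : SemiconvexWith C u) (hdiff : Differentiable ℝ u) {γ₁ γ₂ : ℝ → F}
    (hγ₁ : ∀ t ∈ Icc a b, HasDerivAt γ₁ (-gradient u (γ₁ t)) t)
    (hγ₂ : ∀ t ∈ Icc a b, HasDerivAt γ₂ (-gradient u (γ₂ t)) t)
    (hinit : γ₁ a = γ₂ a) :
    EqOn γ₁ γ₂ (Icc a b) := by
  have hsq : ∀ t ∈ Icc a b, HasDerivAt (fun s => ‖γ₁ s - γ₂ s‖ ^ 2)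
      (2 * ⟪γ₁ t - γ₂ t, -gradient u (γ₁ t) - -gradient u (γ₂ t)⟫) t :=
    fun t ht => ((hγ₁ t ht).sub (hγ₂ t ht)).norm_sq
  have hbound : ∀ t, 2 * ⟪γ₁ t - γ₂ t, -gradient u (γ₁ t) - -gradient u (γ₂ t)⟫
      ≤ 4 * C * ‖γ₁ t - γ₂ t‖ ^ 2 := fun t => by
    have := hu.inner_gradient_sub_ge hdiff (γ₂ t) (γ₁ t)
    rw [neg_sub_neg, ← neg_sub (gradient u (γ₁ t)), inner_neg_right, real_inner_comm]
    linarith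
  intro t ht
  have hle := nonpos_of_deriv_right_le_mul_self
    (fun s hs => (hsq s hs).continuousAt.continuousWithinAt)
    (fun s hs => (hsq s (Ico_subset_Icc_self hs)).hasDerivWithinAt) (by simp [hinit])
    (fun s _ => hbound s) t ht
  simpa [sub_eq_zero] using hle

end Semiconvex

theorem statement15_general {n : ℕ} (u : EuclideanSpace ℝ (Fin n) → ℝ)
    (hdiff : Differentiable ℝ u)
    (C : ℝ)
    (hconv : ConvexOn ℝ Set.univ (fun x => u x + C * ‖x‖ ^ 2))
    (T : ℝ) (γ₁ γ₂ : ℝ → EuclideanSpace ℝ (Fin n))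
    (hγ₁ : ∀ t ∈ Icc (0 : ℝ) T, HasDerivAt γ₁ (-gradient u (γ₁ t)) t)
    (hγ₂ : ∀ t ∈ Icc (0 : ℝ) T, HasDerivAt γ₂ (-gradient u (γ₂ t)) t)
    (hinit : γ₁ 0 = γ₂ 0) :
    ∀ t ∈ Icc (0 : ℝ) T, γ₁ t = γ₂ t :=
  SemiconvexWith.eqOn_of_hasDerivAt_neg_gradient hconv hdiff hγ₁ hγ₂ hinit

/-- For a differentiable semiconvex function with continuous gradient, solutions of
the descending gradient flow are unique. -/
theorem statement15 {n : ℕ} (u : EuclideanSpace ℝ (Fin n) → ℝ)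
    (hdiff : Differentiable ℝ u) (hgradc : Continuous (gradient u))
    (C : ℝ) (hC : 0 < C)
    (hconv : ConvexOn ℝ Set.univ (fun x => u x + C * ‖x‖ ^ 2))
    (T : ℝ) (hT : 0 ≤ T) (γ₁ γ₂ : ℝ → EuclideanSpace ℝ (Fin n))
    (hγ₁ : ∀ t ∈ Icc (0 : ℝ) T, HasDerivAt γ₁ (-gradient u (γ₁ t)) t)
    (hγ₂ : ∀ t ∈ Icc (0 : ℝ) T, HasDerivAt γ₂ (-gradient u (γ₂ t)) t)
    (hinit : γ₁ 0 = γ₂ 0) :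
    ∀ t ∈ Icc (0 : ℝ) T, γ₁ t = γ₂ t :=
  statement15_general u hdiff C hconv T γ₁ γ₂ hγ₁ hγ₂ hinit
end
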